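/- arXiv:math/0207286 — 2 statements merged into one kernel-verified Lean document; each statement's English description precedes it below -/
import Mathlib

section
/- Let p be an odd prime, k ≥ 0, and let ε ∈ U_{k,p^{k+1}−1} be a real unit of ℤ[ζ_k] with ε ≡ 1 (mod λ_k^{p^{k+1}−1}). If ε is not the p-th power of an element of ℤ[ζ_k], then ε is also not the p-th power of any element of ℤ[ζ_{k+1}] (where ℤ[ζ_k] is embedded into ℤ[ζ_{k+1}] by ζ_k ↦ ζ_{k+1}^p). -/
open NumberField Polynomial

noncomputable section

namespace KM

variable (p : ℕ+)

/-- The cyclotomic field `ℚ(ζ_m)`, where `ζ_m` is a primitive `p^(m+1)`-th root of unity. -/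
abbrev K (m : ℕ) : Type := CyclotomicField ((p ^ (m + 1) : ℕ+) : ℕ) ℚ

instance (m : ℕ) : NumberField (K p m) :=
  @IsCyclotomicExtension.numberField {((p ^ (m + 1) : ℕ+) : ℕ)} ℚ _ _ _ (CyclotomicField.algebra _ _) _ _ _

/-- The ring of integers `ℤ[ζ_m]` of `ℚ(ζ_m)`. -/
abbrev R (m : ℕ) : Type := 𝓞 (K p m)

/-- A fixed primitive `p^(m+1)`-th root of unity in `K p m`. -/
def zetaK (m : ℕ) : K p m := @IsCyclotomicExtension.zeta ((p ^ (m + 1) : ℕ+) : ℕ) _ ℚ (K p m) _ _ (CyclotomicField.algebra _ _) _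

lemma zetaK_prim (m : ℕ) : IsPrimitiveRoot (zetaK p m) ((p : ℕ) ^ (m + 1)) := by
  have h := @IsCyclotomicExtension.zeta_spec ((p ^ (m + 1) : ℕ+) : ℕ) _ ℚ (K p m) _ _ (CyclotomicField.algebra _ _) _
  simpa [zetaK, PNat.pow_coe] using h

/-- `ζ_m` as an element of the ring of integers `ℤ[ζ_m]`. -/
def zetaR (m : ℕ) : R p m :=
  ⟨zetaK p m, (zetaK_prim p m).isIntegral (by positivity)⟩

/-- The ideal `λ_m = (ζ_m - 1)` of `ℤ[ζ_m]`. -/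
def lam (m : ℕ) : Ideal (R p m) := Ideal.span {zetaR p m - 1}

/-- The subgroup of units of `ℤ[ζ_m]` that are congruent to `1` modulo `λ_m ^ k`. -/
def congU (m k : ℕ) : Subgroup (R p m)ˣ where
  carrier := {u | ((u : R p m) - 1) ∈ (lam p m) ^ k}
  one_mem' := by simp
  mul_mem' := by
    intro a b ha hb
    simp only [Set.mem_setOf_eq, Units.val_mul] at *
    have h : (a : R p m) * b - 1 = (a : R p m) * ((b : R p m) - 1) + ((a : R p m) - 1) := by
      ring
    rw [h]
    exact Ideal.add_mem _ (Ideal.mul_mem_left _ _ hb) ha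
  inv_mem' := by
    intro a ha
    simp only [Set.mem_setOf_eq] at *
    have hinv : ((a⁻¹ : (R p m)ˣ) : R p m) * a = 1 := a.inv_mul
    have h : ((a⁻¹ : (R p m)ˣ) : R p m) - 1
        = (-((a⁻¹ : (R p m)ˣ) : R p m)) * ((a : R p m) - 1) := by
      linear_combination hinv
    rw [h]
    exact Ideal.mul_mem_left _ _ ha

/-- The subgroup of units of `ℤ[ζ_m]` fixed by (complex conjugation) `conj`,
the "real" units. -/
def realU (m : ℕ) (conj : R p m ≃+* R p m) : Subgroup (R p m)ˣ where
  carrier := {u | conj u = u}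
  one_mem' := by simp
  mul_mem' := by
    intro a b ha hb
    simp only [Set.mem_setOf_eq, Units.val_mul, map_mul] at *
    rw [ha, hb]
  inv_mem' := by
    intro a ha
    simp only [Set.mem_setOf_eq] at *
    have h1 : conj ((a⁻¹ : (R p m)ˣ) : R p m) * (a : R p m) = 1 := by
      rw [← ha, ← map_mul, Units.inv_mul, map_one]
    have h2 : conj ((a⁻¹ : (R p m)ˣ) : R p m)
        = (conj ((a⁻¹ : (R p m)ˣ) : R p m) * (a : R p m)) * ((a⁻¹ : (R p m)ˣ) : R p m) := by
      rw [mul_assoc, Units.mul_inv, mul_one]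
    rw [h1, one_mul] at h2
    exact h2

/-- `U_{m,k}`: the group of real units of `ℤ[ζ_m]` congruent to `1` modulo `λ_m ^ k`,
relative to the conjugation automorphism `conj`. -/
def U (m : ℕ) (conj : R p m ≃+* R p m) (k : ℕ) : Subgroup (R p m)ˣ :=
  realU p m conj ⊓ congU p m k

/-- The quotient ring `ℤ[ζ_m] / λ_m ^ k`. -/
abbrev Dq (m k : ℕ) : Type := R p m ⧸ (lam p m) ^ k

/-- Reduction of units of `ℤ[ζ_m]` modulo `λ_m ^ k`. -/
def resU (m k : ℕ) : (R p m)ˣ →* (Dq p m k)ˣ :=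
  Units.map (Ideal.Quotient.mk ((lam p m) ^ k)).toMonoidHom

/-- The group `𝒱_n`: units of `ℤ[ζ_{n-1}] / λ_{n-1} ^ (p^n - 1)` modulo the image of the
global units `ℤ[ζ_{n-1}]ˣ`. -/
abbrev Vgrp (n : ℕ) : Type :=
  (Dq p (n - 1) ((p : ℕ) ^ n - 1))ˣ ⧸ (resU p (n - 1) ((p : ℕ) ^ n - 1)).range

lemma conj_lam_pow_mem {m k : ℕ} (conj : R p m ≃+* R p m)
    (hconj : conj (zetaR p m) * zetaR p m = 1) {x : R p m} (hx : x ∈ (lam p m) ^ k) :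
    conj x ∈ (lam p m) ^ k := by
  rw [lam, Ideal.span_singleton_pow, Ideal.mem_span_singleton] at hx ⊢
  obtain ⟨c, hc⟩ := hx
  have h1 : (zetaR p m - 1) ∣ (conj (zetaR p m) - 1) :=
    ⟨-(conj (zetaR p m)), by linear_combination hconj⟩
  have h2 : (zetaR p m - 1) ^ k ∣ (conj (zetaR p m) - 1) ^ k := pow_dvd_pow_of_dvd h1 k
  refine h2.trans ⟨conj c, ?_⟩
  rw [hc, map_mul, map_pow, map_sub, map_one]

/-- The ring endomorphism of `ℤ[ζ_m] / λ_m ^ k` induced by conjugation. -/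
def conjQ (m k : ℕ) (conj : R p m ≃+* R p m)
    (hconj : conj (zetaR p m) * zetaR p m = 1) : Dq p m k →+* Dq p m k :=
  Ideal.quotientMap ((lam p m) ^ k) (conj : R p m →+* R p m)
    (fun _ hx => Ideal.mem_comap.mpr (conj_lam_pow_mem p conj hconj hx))

/-- The automorphism `c` of `𝒱_n` induced by complex conjugation. -/
def conjV (n : ℕ) (conj : R p (n - 1) ≃+* R p (n - 1))
    (hconj : conj (zetaR p (n - 1)) * zetaR p (n - 1) = 1) :
    Vgrp p n →* Vgrp p n :=
  QuotientGroup.map _ _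
    (Units.map (conjQ p (n - 1) ((p : ℕ) ^ n - 1) conj hconj).toMonoidHom)
    (by
      intro w hw
      rw [Subgroup.mem_comap]
      obtain ⟨v, rfl⟩ := hw
      refine ⟨Units.map (conj : R p (n - 1) →+* R p (n - 1)).toMonoidHom v, ?_⟩
      ext
      simp [resU, conjQ, Ideal.quotientMap_mk])

/-- `𝒱_n^+`: the subgroup of `𝒱_n` fixed by the conjugation automorphism. -/
def Vplus (n : ℕ) (conj : R p (n - 1) ≃+* R p (n - 1))
    (hconj : conj (zetaR p (n - 1)) * zetaR p (n - 1) = 1) : Subgroup (Vgrp p n) where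
  carrier := {v | conjV p n conj hconj v = v}
  one_mem' := by simp
  mul_mem' := by
    intro a b ha hb
    simp only [Set.mem_setOf_eq, map_mul] at *
    rw [ha, hb]
  inv_mem' := by
    intro a ha
    simp only [Set.mem_setOf_eq, map_inv] at *
    rw [ha]

/-- The maximal real subfield `ℚ(ζ_0)⁺ = ℚ(ζ_0 + ζ_0⁻¹)` of `ℚ(ζ_0) = ℚ(ζ_p)`. -/
def Kplus : IntermediateField ℚ (K p 0) :=
  IntermediateField.adjoin ℚ {zetaK p 0 + (zetaK p 0)⁻¹}

/-- `p` is semi-regular if `p` does not divide the class number `h⁺` of the maximal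
real subfield of `ℚ(ζ_p)`. -/
def SemiRegular : Prop :=
  ¬ ((p : ℕ) ∣ Nat.card (ClassGroup (𝓞 (Kplus p))))

/-- `r(p)`: the index of irregularity of `p`, i.e. the number of `k` with
`1 ≤ k ≤ (p-3)/2` such that `p` divides the numerator of the Bernoulli number `B_{2k}`. -/
def rp : ℕ :=
  ((Finset.Icc 1 (((p : ℕ) - 3) / 2)).filter fun k => (p : ℤ) ∣ (_root_.bernoulli (2 * k)).num).card


/-- The quotient of a commutative group by the subgroup of `e`-th powers of its elements. -/
abbrev modPow (G : Type*) [CommGroup G] (e : ℕ) : Type _ :=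
  G ⧸ (powMonoidHom (α := G) e).range

end KM

namespace KM

section Aux

variable (p : ℕ+) (m : ℕ)

instance instCycK : IsCyclotomicExtension {((p ^ (m + 1) : ℕ+) : ℕ)} ℚ (K p m) := by
  have h : @IsCyclotomicExtension {((p ^ (m + 1) : ℕ+) : ℕ)} ℚ (K p m) _ _
      (CyclotomicField.algebra _ _) := inferInstance
  convert h
  exact Subsingleton.elim _ _

instance instCycK' : IsCyclotomicExtension {(p : ℕ) ^ (m + 1)} ℚ (K p m) := by
  rw [← PNat.pow_coe]; exact instCycK p m

lemma zetaK_prim' : IsPrimitiveRoot (zetaK p m) ((p ^ (m + 1) : ℕ+) : ℕ) := by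
  have h := zetaK_prim p m; rwa [← PNat.pow_coe] at h

lemma zetaR_eq_toInteger : zetaR p m = (zetaK_prim' p m).toInteger := rfl

lemma zetaR_prim' : IsPrimitiveRoot (zetaR p m) ((p ^ (m + 1) : ℕ+) : ℕ) :=
  (zetaK_prim' p m).toInteger_isPrimitiveRoot

lemma zetaR_prim : IsPrimitiveRoot (zetaR p m) ((p : ℕ) ^ (m + 1)) := by
  rw [← PNat.pow_coe]; exact zetaR_prim' p m

lemma zetaR_sub_one_prime (hp : (p : ℕ).Prime) : Prime (zetaR p m - 1) := by
  haveI : Fact (Nat.Prime (p : ℕ)) := ⟨hp⟩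
  exact (zetaK_prim p m).zeta_sub_one_prime

lemma zetaR_sub_one_dvd_p (hp : (p : ℕ).Prime) :
    (zetaR p m - 1) ∣ (((p : ℕ) : R p m)) := by
  haveI : Fact (Nat.Prime (p : ℕ)) := ⟨hp⟩
  have h := (zetaK_prim p m).toInteger_sub_one_dvd_prime
  exact h

lemma lam_dvd_intCast (hp : (p : ℕ).Prime) {n : ℤ}
    (h : (zetaR p m - 1) ∣ ((n : ℤ) : R p m)) : (p : ℤ) ∣ n := by
  by_contra hn
  have hcop : IsCoprime ((p : ℕ) : ℤ) n := by
    rw [Int.isCoprime_iff_gcd_eq_one]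
    have h1 : ¬ ((p : ℕ) ∣ n.natAbs) := fun hd => hn (Int.natCast_dvd.mpr hd)
    have h2 := (Nat.Prime.coprime_iff_not_dvd hp).mpr h1
    simpa [Int.gcd] using h2
  obtain ⟨a, b, hab⟩ := hcop
  have hpd : (zetaR p m - 1) ∣ (((p : ℕ)) : R p m) := zetaR_sub_one_dvd_p p m hp
  have h2 : (zetaR p m - 1) ∣ (((a * ((p : ℕ) : ℤ) + b * n) : ℤ) : R p m) := by
    push_cast
    exact dvd_add ((by push_cast at hpd ⊢; exact hpd : (zetaR p m - 1) ∣
      (((p : ℕ) : ℤ) : R p m)).mul_left _) (h.mul_left _)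
  rw [hab] at h2
  exact (zetaR_sub_one_prime p m hp).not_unit (isUnit_of_dvd_one (by exact_mod_cast h2))

lemma lam_sq_dvd_p (hp : (p : ℕ).Prime) (hodd : Odd (p : ℕ)) :
    (zetaR p m - 1) ^ 2 ∣ (((p : ℕ) : R p m)) := by
  haveI : Fact (Nat.Prime (p : ℕ)) := ⟨hp⟩
  set ζ := zetaR p m with hζdef
  have hζprim := zetaR_prim p m
  set η := ζ ^ ((p : ℕ)) ^ m with hηdef
  have hηprim : IsPrimitiveRoot η (p : ℕ) := by
    refine hζprim.pow (by positivity) (by ring)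
  have hgeom : ∑ i ∈ Finset.range (p : ℕ), η ^ i = 0 := hηprim.geom_sum_eq_zero hp.one_lt
  have hps : (((p : ℕ)) : R p m) = ∑ i ∈ Finset.range (p : ℕ), ((1 : R p m) - η ^ i) := by
    rw [Finset.sum_sub_distrib, hgeom, sub_zero, Finset.sum_const, Finset.card_range,
      nsmul_eq_mul, mul_one]
  have hζη : (ζ - 1) ∣ (η - 1) := by
    simpa using sub_dvd_pow_sub_pow ζ 1 ((p : ℕ) ^ m)
  have hfac : ∀ i : ℕ, (1 : R p m) - η ^ i = -((∑ j ∈ Finset.range i, η ^ j) * (η - 1)) := by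
    intro i; rw [geom_sum_mul]; ring
  have hS : (((p : ℕ)) : R p m)
      = -((∑ i ∈ Finset.range (p : ℕ), ∑ j ∈ Finset.range i, η ^ j) * (η - 1)) := by
    rw [hps]
    simp only [hfac]
    rw [Finset.sum_neg_distrib, Finset.sum_mul]
  have hdvd_T : (ζ - 1) ∣ ((∑ i ∈ Finset.range (p : ℕ), (i : R p m))) := by
    obtain ⟨t, ht⟩ := hodd
    have hsum2 : (∑ i ∈ Finset.range (p : ℕ), i) * 2 = (p : ℕ) * ((p : ℕ) - 1) :=
      Finset.sum_range_id_mul_two _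
    have hstep : (p : ℕ) * ((p : ℕ) - 1) = (p : ℕ) * t * 2 := by
      rw [ht]
      have h1 : 2 * t + 1 - 1 = 2 * t := by omega
      rw [h1]; ring
    have hsum : (∑ i ∈ Finset.range (p : ℕ), i) = (p : ℕ) * t := by
      have h2 := hsum2.trans hstep
      omega
    have hcast : (∑ i ∈ Finset.range (p : ℕ), (i : R p m))
        = (((p : ℕ) * t : ℕ) : R p m) := by
      rw [← Nat.cast_sum, hsum]
    rw [hcast]
    push_cast
    exact (zetaR_sub_one_dvd_p p m hp).mul_right _
  have hdvd_S : (ζ - 1) ∣ (∑ i ∈ Finset.range (p : ℕ), ∑ j ∈ Finset.range i, η ^ j) := by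
    have h1 : (ζ - 1) ∣ ((∑ i ∈ Finset.range (p : ℕ), ∑ j ∈ Finset.range i, η ^ j)
        - ∑ i ∈ Finset.range (p : ℕ), (i : R p m)) := by
      rw [← Finset.sum_sub_distrib]
      refine Finset.dvd_sum fun i _ => ?_
      have heq : (∑ j ∈ Finset.range i, η ^ j) - (i : R p m)
          = ∑ j ∈ Finset.range i, (η ^ j - 1) := by
        rw [Finset.sum_sub_distrib, Finset.sum_const, Finset.card_range, nsmul_eq_mul, mul_one]
      rw [heq]
      refine Finset.dvd_sum fun j _ => hζη.trans ?_
      simpa using sub_dvd_pow_sub_pow η 1 j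
    have := dvd_add h1 hdvd_T
    simpa using this
  have hfin : (ζ - 1) * (ζ - 1)
      ∣ (∑ i ∈ Finset.range (p : ℕ), ∑ j ∈ Finset.range i, η ^ j) * (η - 1) :=
    mul_dvd_mul hdvd_S hζη
  rw [hS, sq]
  exact hfin.neg_right

lemma exists_residue (hp : (p : ℕ).Prime) (x : R p m) :
    ∃ r : ℤ, (zetaR p m - 1) ∣ (x - (r : R p m)) := by
  haveI : Fact (Nat.Prime (p : ℕ)) := ⟨hp⟩
  obtain ⟨f, hf⟩ := ((zetaK_prim' p m).integralPowerBasis).exists_eq_aeval' x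
  have hgen : (zetaK_prim' p m).integralPowerBasis.gen = zetaR p m :=
    (zetaK_prim' p m).integralPowerBasis_gen
  rw [hgen] at hf
  refine ⟨Polynomial.eval 1 f, ?_⟩
  have hdvd := Polynomial.sub_dvd_eval_sub (zetaR p m) 1 (f.map (algebraMap ℤ (R p m)))
  rw [Polynomial.eval_map, Polynomial.eval_map, Polynomial.eval₂_at_one,
    ← Polynomial.aeval_def] at hdvd
  rw [hf]
  simpa using hdvd

lemma pow_p_congr (hp : (p : ℕ).Prime) (hodd : Odd (p : ℕ)) (x : R p m) (r : ℤ)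
    (h : (zetaR p m - 1) ∣ (x - (r : R p m))) :
    (zetaR p m - 1) ^ 2 ∣ (x ^ (p : ℕ) - (r : R p m)) := by
  haveI : Fact (Nat.Prime (p : ℕ)) := ⟨hp⟩
  set ζ := zetaR p m with hζdef
  set u := ζ - 1 with hudef
  set rR : R p m := ((r : ℤ) : R p m) with hrRdef
  have hgs := geom_sum₂_mul x rR (p : ℕ)
  have hSig : u ∣ ∑ i ∈ Finset.range (p : ℕ), x ^ i * rR ^ ((p : ℕ) - 1 - i) := by
    have h1 : u ∣ (∑ i ∈ Finset.range (p : ℕ), x ^ i * rR ^ ((p : ℕ) - 1 - i))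
        - ∑ i ∈ Finset.range (p : ℕ), rR ^ ((p : ℕ) - 1) := by
      rw [← Finset.sum_sub_distrib]
      refine Finset.dvd_sum fun i hi => ?_
      have hie : i + ((p : ℕ) - 1 - i) = (p : ℕ) - 1 := by
        have h2 := Finset.mem_range.mp hi
        have h3 := hp.two_le
        omega
      have heq : x ^ i * rR ^ ((p : ℕ) - 1 - i) - rR ^ ((p : ℕ) - 1)
          = (x ^ i - rR ^ i) * rR ^ ((p : ℕ) - 1 - i) := by
        rw [sub_mul, ← pow_add, hie]
      rw [heq]
      exact (h.trans (sub_dvd_pow_sub_pow x rR i)).mul_right _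
    have h2 : u ∣ (∑ i ∈ Finset.range (p : ℕ), rR ^ ((p : ℕ) - 1)) := by
      rw [Finset.sum_const, Finset.card_range, nsmul_eq_mul]
      exact (zetaR_sub_one_dvd_p p m hp).mul_right _
    have := dvd_add h1 h2
    simpa using this
  have hx : u ^ 2 ∣ x ^ (p : ℕ) - rR ^ (p : ℕ) := by
    rw [← hgs, sq]
    exact mul_dvd_mul hSig h
  have hr : u ^ 2 ∣ rR ^ (p : ℕ) - rR := by
    have hz : ((r ^ (p : ℕ) - r : ℤ) : ZMod (p : ℕ)) = 0 := by
      push_cast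
      rw [ZMod.pow_card]
      ring
    obtain ⟨w, hw⟩ := (ZMod.intCast_zmod_eq_zero_iff_dvd _ _).mp hz
    have hcast : rR ^ (p : ℕ) - rR = (((p : ℕ)) : R p m) * ((w : ℤ) : R p m) := by
      have := congrArg (fun z : ℤ => ((z : ℤ) : R p m)) hw
      push_cast at this ⊢
      linear_combination this
    rw [hcast]
    exact (lam_sq_dvd_p p m hp hodd).mul_right _
  have := dvd_add hx hr
  simpa using this

lemma key_dvd (hp : (p : ℕ).Prime) (hodd : Odd (p : ℕ)) (e Y : R p m) (t : ℕ)
    (he : (zetaR p m - 1) ^ 2 ∣ (e - 1)) (hY : Y ^ (p : ℕ) = e * zetaR p m ^ t) :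
    (p : ℕ) ∣ t := by
  haveI : Fact (Nat.Prime (p : ℕ)) := ⟨hp⟩
  set ζ := zetaR p m with hζdef
  set u := ζ - 1 with hudef
  obtain ⟨r, hr⟩ := exists_residue p m hp Y
  have h1 : u ^ 2 ∣ (e * ζ ^ t - (r : R p m)) := by
    rw [← hY]; exact pow_p_congr p m hp hodd Y r hr
  have h2 : u ^ 2 ∣ (e - 1) * ζ ^ t := he.mul_right _
  have h3 : u ^ 2 ∣ (ζ ^ t - (r : R p m)) := by
    have hd := dvd_sub h1 h2
    convert hd using 1
    ring
  have h4 : u ^ 2 ∣ (ζ ^ t - 1 - (t : R p m) * u) := by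
    have hgm : (∑ i ∈ Finset.range t, ζ ^ i) * u = ζ ^ t - 1 := geom_sum_mul ζ t
    have h5 : u ∣ (∑ i ∈ Finset.range t, ζ ^ i) - (t : R p m) := by
      have heq : (∑ i ∈ Finset.range t, ζ ^ i) - (t : R p m)
          = ∑ i ∈ Finset.range t, (ζ ^ i - 1) := by
        rw [Finset.sum_sub_distrib, Finset.sum_const, Finset.card_range, nsmul_eq_mul, mul_one]
      rw [heq]
      exact Finset.dvd_sum fun i _ => by simpa using sub_dvd_pow_sub_pow ζ 1 i
    obtain ⟨w, hw⟩ := h5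
    refine ⟨w, ?_⟩
    linear_combination u * hw - hgm
  have h6 : u ^ 2 ∣ ((1 - r : ℤ) : R p m) + (t : R p m) * u := by
    have hd := dvd_sub h3 h4
    convert hd using 1
    push_cast
    ring
  have h7 : u ∣ ((1 - r : ℤ) : R p m) := by
    have husq : u ∣ u ^ 2 := dvd_pow_self u two_ne_zero
    have h8 := husq.trans h6
    have h9 : u ∣ (t : R p m) * u := Dvd.intro_left _ rfl
    have := dvd_sub h8 h9
    simpa using this
  obtain ⟨w2, hw2⟩ := lam_dvd_intCast p m hp h7
  have h8 : u ^ 2 ∣ ((1 - r : ℤ) : R p m) := by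
    rw [hw2]
    push_cast
    exact (lam_sq_dvd_p p m hp hodd).mul_right _
  have h9 : u ^ 2 ∣ (t : R p m) * u := by
    have := dvd_sub h6 h8
    simpa using this
  have hu0 : u ≠ 0 := (zetaR_sub_one_prime p m hp).ne_zero
  have h10 : u ∣ (t : R p m) := by
    obtain ⟨w3, hw3⟩ := h9
    refine ⟨w3, ?_⟩
    have hmul : (t : R p m) * u = (u * w3) * u := by
      rw [hw3]; ring
    exact mul_right_cancel₀ hu0 hmul
  have h11 : (p : ℤ) ∣ ((t : ℕ) : ℤ) := by
    refine lam_dvd_intCast p m hp ?_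
    push_cast at h10 ⊢
    exact h10
  exact_mod_cast h11

end Aux

set_option maxHeartbeats 2000000

/-- Let `p` be an odd prime, `k ≥ 0`, and let `ε ∈ U_{k,p^{k+1}-1}`.
If `ε` is not a `p`-th power in `ℤ[ζ_k]`, then its image under the inclusion
`ℤ[ζ_k] → ℤ[ζ_{k+1}]`, `ζ_k ↦ ζ_{k+1}^p`, is not a `p`-th power in `ℤ[ζ_{k+1}]`. -/
theorem statement7 (p : ℕ+) (hp : (p : ℕ).Prime) (hodd : Odd (p : ℕ)) (k : ℕ)
    (conj : R p k ≃+* R p k) (hconj : conj (zetaR p k) * zetaR p k = 1)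
    (ι : R p k →+* R p (k + 1))
    (hι : ι (zetaR p k) = (zetaR p (k + 1)) ^ (p : ℕ))
    (ε : (R p k)ˣ) (hε : ε ∈ U p k conj ((p : ℕ) ^ (k + 1) - 1))
    (h : ¬ ∃ a : R p k, a ^ (p : ℕ) = (ε : R p k)) :
    ¬ ∃ b : R p (k + 1), b ^ (p : ℕ) = ι (ε : R p k) := by
  haveI hfact : Fact (Nat.Prime (p : ℕ)) := ⟨hp⟩
  haveI : NeZero (p : ℕ) := ⟨hp.pos.ne'⟩
  rintro ⟨b, hb⟩
  -- basic primitive roots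
  have hζL : IsPrimitiveRoot (zetaK p (k + 1)) ((p ^ (k + 1 + 1) : ℕ+) : ℕ) :=
    zetaK_prim' p (k + 1)
  have hζLn : IsPrimitiveRoot (zetaK p (k + 1)) ((p : ℕ) ^ (k + 1 + 1)) := zetaK_prim p (k + 1)
  have hζLpow : IsPrimitiveRoot ((zetaK p (k + 1)) ^ (p : ℕ)) ((p : ℕ) ^ (k + 1)) :=
    hζLn.pow (by positivity) (by ring)
  -- the embedding f : K p k →ₐ[ℚ] K p (k+1)
  have hmin : minpoly ℚ (zetaK p k) = Polynomial.cyclotomic (((p ^ (k + 1) : ℕ+)) : ℕ) ℚ :=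
    (Polynomial.cyclotomic_eq_minpoly_rat (zetaK_prim' p k) (p ^ (k + 1)).pos).symm
  have hpbgen : ((zetaK_prim' p k).powerBasis ℚ).gen = zetaK p k :=
    IsPrimitiveRoot.powerBasis_gen _ _
  have haevalroot : Polynomial.aeval ((zetaK p (k + 1)) ^ (p : ℕ))
      (minpoly ℚ ((zetaK_prim' p k).powerBasis ℚ).gen) = 0 := by
    rw [hpbgen, hmin, Polynomial.aeval_def, ← Polynomial.eval_map, Polynomial.map_cyclotomic]
    have hroot := hζLpow.isRoot_cyclotomic (n := ((p : ℕ) ^ (k + 1))) (by positivity)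
    have hco : (((p ^ (k + 1) : ℕ+)) : ℕ) = (p : ℕ) ^ (k + 1) := by rw [PNat.pow_coe]
    rw [hco]
    exact hroot
  set f : K p k →ₐ[ℚ] K p (k + 1) :=
    ((zetaK_prim' p k).powerBasis ℚ).lift ((zetaK p (k + 1)) ^ (p : ℕ)) haevalroot with hfdef
  have hfζ : f (zetaK p k) = (zetaK p (k + 1)) ^ (p : ℕ) := by
    conv_lhs => rw [← hpbgen]
    exact PowerBasis.lift_gen _ _ _
  letI : Algebra (K p k) (K p (k + 1)) := f.toRingHom.toAlgebra
  haveI : IsScalarTower ℚ (K p k) (K p (k + 1)) :=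
    IsScalarTower.of_algebraMap_eq fun x => (f.commutes x).symm
  have halg : algebraMap (K p k) (K p (k + 1)) = f.toRingHom := rfl
  -- Galois structure over K p k
  haveI hgalQ : IsGalois ℚ (K p (k + 1)) :=
    IsCyclotomicExtension.isGalois {((p ^ (k + 1 + 1) : ℕ+) : ℕ)} ℚ (K p (k + 1))
  haveI hgal : IsGalois (K p k) (K p (k + 1)) :=
    IsGalois.tower_top_of_isGalois ℚ (K p k) (K p (k + 1))
  haveI : FiniteDimensional (K p k) (K p (k + 1)) := Module.Finite.right ℚ _ _
  -- degree computation
  have hrk1 : Module.finrank ℚ (K p k) = ((p : ℕ) ^ (k + 1)).totient := by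
    have hh := IsCyclotomicExtension.finrank (n := p ^ (k + 1)) (K := ℚ) (K p k)
      (Polynomial.cyclotomic.irreducible_rat (p ^ (k + 1)).pos)
    exact hh
  have hrk2 : Module.finrank ℚ (K p (k + 1)) = ((p : ℕ) ^ (k + 1 + 1)).totient := by
    have hh := IsCyclotomicExtension.finrank (n := p ^ (k + 1 + 1)) (K := ℚ) (K p (k + 1))
      (Polynomial.cyclotomic.irreducible_rat (p ^ (k + 1 + 1)).pos)
    exact hh
  have htot1 : ((p : ℕ) ^ (k + 1)).totient = (p : ℕ) ^ k * ((p : ℕ) - 1) := by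
    rw [Nat.totient_prime_pow hp (Nat.succ_pos k)]
    simp
  have htot2 : ((p : ℕ) ^ (k + 1 + 1)).totient = (p : ℕ) ^ (k + 1) * ((p : ℕ) - 1) := by
    rw [Nat.totient_prime_pow hp (Nat.succ_pos (k + 1))]
    simp
  have hdeg : Module.finrank (K p k) (K p (k + 1)) = (p : ℕ) := by
    have hmul := Module.finrank_mul_finrank ℚ (K p k) (K p (k + 1))
    rw [hrk1, hrk2, htot1, htot2] at hmul
    have hpos : 0 < (p : ℕ) ^ k * ((p : ℕ) - 1) := by
      have h2 := hp.two_le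
      have hkpos : 0 < (p : ℕ) ^ k := pow_pos hp.pos k
      have : 0 < (p : ℕ) - 1 := by omega
      exact Nat.mul_pos hkpos this
    refine Nat.eq_of_mul_eq_mul_left hpos ?_
    rw [hmul, pow_succ]
    ring
  -- a nontrivial element of the Galois group
  have hcard : Fintype.card (K p (k + 1) ≃ₐ[K p k] K p (k + 1)) = (p : ℕ) := by
    rw [← Nat.card_eq_fintype_card, IsGalois.card_aut_eq_finrank, hdeg]
  obtain ⟨σ, hσ1⟩ : ∃ σ : K p (k + 1) ≃ₐ[K p k] K p (k + 1), σ ≠ 1 := by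
    have h1lt : 1 < Fintype.card (K p (k + 1) ≃ₐ[K p k] K p (k + 1)) := by
      rw [hcard]; exact hp.one_lt
    obtain ⟨σ, hσ⟩ := Fintype.exists_ne_of_one_lt_card h1lt 1
    exact ⟨σ, hσ⟩
  have hadjL : Algebra.adjoin (K p k) ({zetaK p (k + 1)} : Set (K p (k + 1))) = ⊤ := by
    have hadjQ : Algebra.adjoin ℚ ({zetaK p (k + 1)} : Set (K p (k + 1))) = ⊤ :=
      IsCyclotomicExtension.adjoin_primitive_root_eq_top hζL
    have hle : Algebra.adjoin ℚ ({zetaK p (k + 1)} : Set (K p (k + 1)))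
        ≤ Subalgebra.restrictScalars ℚ
          (Algebra.adjoin (K p k) ({zetaK p (k + 1)} : Set (K p (k + 1)))) :=
      Algebra.adjoin_le (Algebra.subset_adjoin)
    rw [eq_top_iff]
    intro x _
    exact hle (hadjQ ▸ Algebra.mem_top)
  have hσζ : σ (zetaK p (k + 1)) ≠ zetaK p (k + 1) := by
    intro heq
    apply hσ1
    have hhom : σ.toAlgHom = (1 : K p (k + 1) ≃ₐ[K p k] K p (k + 1)).toAlgHom := by
      refine AlgHom.ext_of_adjoin_eq_top hadjL ?_
      intro y hy
      rw [Set.mem_singleton_iff] at hy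
      subst hy
      simpa using heq
    ext x
    exact AlgHom.congr_fun hhom x
  -- compatibility of ι with f
  have hcomp : ∀ x : R p k, algebraMap (R p (k + 1)) (K p (k + 1)) (ι x)
      = algebraMap (K p k) (K p (k + 1)) (algebraMap (R p k) (K p k) x) := by
    have hadjR : Algebra.adjoin ℤ ({zetaR p k} : Set (R p k)) = ⊤ :=
      IsCyclotomicExtension.adjoin_primitive_root_eq_top (zetaR_prim' p k)
    have hhom : ((algebraMap (R p (k + 1)) (K p (k + 1))).comp ι).toIntAlgHom
        = (((algebraMap (K p k) (K p (k + 1))).comp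
            (algebraMap (R p k) (K p k)))).toIntAlgHom := by
      refine AlgHom.ext_of_adjoin_eq_top hadjR ?_
      intro y hy
      rw [Set.mem_singleton_iff] at hy
      subst hy
      show algebraMap (R p (k + 1)) (K p (k + 1)) (ι (zetaR p k))
        = algebraMap (K p k) (K p (k + 1)) (algebraMap (R p k) (K p k) (zetaR p k))
      rw [hι, map_pow]
      have h1 : algebraMap (R p (k + 1)) (K p (k + 1)) (zetaR p (k + 1)) = zetaK p (k + 1) := rfl
      have h2 : algebraMap (R p k) (K p k) (zetaR p k) = zetaK p k := rfl
      rw [h1, h2, halg]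
      exact hfζ.symm
    intro x
    exact RingHom.congr_fun (congrArg AlgHom.toRingHom hhom) x
  -- move everything into K p (k+1)
  set ζL := zetaK p (k + 1) with hζLdef
  set ξ := ζL ^ ((p : ℕ) ^ (k + 1)) with hξdef
  have hξprim : IsPrimitiveRoot ξ (p : ℕ) := hζLn.pow (by positivity) (by ring)
  clear_value ξ
  set bL := algebraMap (R p (k + 1)) (K p (k + 1)) b with hbLdef
  set εK := algebraMap (R p k) (K p k) (ε : R p k) with hεKdef
  have hbp : bL ^ (p : ℕ) = algebraMap (K p k) (K p (k + 1)) εK := by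
    rw [hbLdef, ← map_pow, hb, hcomp]
  have hεK0 : εK ≠ 0 := by
    rw [hεKdef]
    exact (map_ne_zero_iff _ NumberField.RingOfIntegers.coe_injective).mpr ε.ne_zero
  have hεL0 : algebraMap (K p k) (K p (k + 1)) εK ≠ 0 :=
    (map_ne_zero_iff _ (algebraMap (K p k) (K p (k + 1))).injective).mpr hεK0
  have hbL0 : bL ≠ 0 := by
    intro h0
    rw [h0, zero_pow hp.pos.ne'] at hbp
    exact hεL0 hbp.symm
  have hσbp : (σ bL) ^ (p : ℕ) = bL ^ (p : ℕ) := by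
    rw [← map_pow, hbp]
    exact σ.commutes εK
  have hratio : (σ bL * bL⁻¹) ^ (p : ℕ) = 1 := by
    rw [mul_pow, hσbp, inv_pow, mul_inv_cancel₀ (pow_ne_zero _ hbL0)]
  obtain ⟨i, hip, hi⟩ := hξprim.eq_pow_of_pow_eq_one hratio
  have hσb : σ bL = ξ ^ i * bL := by
    rw [hi]
    field_simp
  have hζLp : ζL ^ (p : ℕ) = algebraMap (K p k) (K p (k + 1)) (zetaK p k) := by
    rw [halg]
    exact hfζ.symm
  have hσζp : (σ ζL) ^ (p : ℕ) = ζL ^ (p : ℕ) := by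
    rw [← map_pow, hζLp]
    exact σ.commutes _
  have hζL0 : ζL ≠ 0 := hζLn.ne_zero (by positivity)
  have hratio0 : (σ ζL * ζL⁻¹) ^ (p : ℕ) = 1 := by
    rw [mul_pow, hσζp, inv_pow, mul_inv_cancel₀ (pow_ne_zero _ hζL0)]
  obtain ⟨i0, hi0p, hi0⟩ := hξprim.eq_pow_of_pow_eq_one hratio0
  have hσζL : σ ζL = ξ ^ i0 * ζL := by
    rw [hi0]
    field_simp
  have hi0ne : ¬ ((p : ℕ) ∣ i0) := by
    intro hdvd
    have hone : ξ ^ i0 = 1 := hξprim.pow_eq_one_iff_dvd i0 |>.mpr hdvd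
    exact hσζ (by rw [hσζL, hone, one_mul])
  -- choose the exponent t
  have hi0z : ((i0 : ZMod (p : ℕ))) ≠ 0 := fun hz =>
    hi0ne ((ZMod.natCast_eq_zero_iff _ _).mp hz)
  set tz : ZMod (p : ℕ) := (-(i : ZMod (p : ℕ))) * (i0 : ZMod (p : ℕ))⁻¹ with htzdef
  set t := tz.val with htdef
  have htlt : t < (p : ℕ) := ZMod.val_lt tz
  have hexp : (p : ℕ) ∣ (i + t * i0) := by
    have hcast : ((t : ℕ) : ZMod (p : ℕ)) = tz := ZMod.natCast_zmod_val tz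
    rw [← ZMod.natCast_eq_zero_iff]
    push_cast
    rw [hcast, htzdef]
    field_simp
    ring
  obtain ⟨w, hwexp⟩ := hexp
  have hξexp : ξ ^ (i + t * i0) = 1 := by
    rw [hwexp, pow_mul, hξprim.pow_eq_one, one_pow]
  set c := bL * ζL ^ t with hcdef
  have hσc : σ c = c := by
    rw [hcdef, map_mul, map_pow, hσb, hσζL]
    have hstep : (ξ ^ i * bL) * (ξ ^ i0 * ζL) ^ t = ξ ^ (i + t * i0) * (bL * ζL ^ t) := by
      have e1 : (ξ ^ i0 * ζL) ^ t = ξ ^ (i0 * t) * ζL ^ t := by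
        rw [mul_pow, ← pow_mul]
      have e2 : ξ ^ (i + t * i0) = ξ ^ i * ξ ^ (t * i0) := pow_add ξ i (t * i0)
      have e3 : i0 * t = t * i0 := Nat.mul_comm _ _
      rw [e1, e3, e2]
      ring
    rw [hstep, hξexp, one_mul]
  -- c is fixed by the whole Galois group
  have horder : orderOf σ = (p : ℕ) := by
    have hdvd : orderOf σ ∣ (p : ℕ) := hcard ▸ orderOf_dvd_card
    rcases (Nat.dvd_prime hp).mp hdvd with h1 | h1
    · exact absurd (orderOf_eq_one_iff.mp h1) hσ1
    · exact h1
  have htop : Subgroup.zpowers σ = ⊤ := by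
    apply Subgroup.eq_top_of_card_eq
    rw [Nat.card_zpowers, horder, ← hcard, Nat.card_eq_fintype_card]
  have hfix : ∀ τ : K p (k + 1) ≃ₐ[K p k] K p (k + 1), τ c = c := by
    have hstab : Subgroup.zpowers σ
        ≤ MulAction.stabilizer (K p (k + 1) ≃ₐ[K p k] K p (k + 1)) c := by
      rw [Subgroup.zpowers_le]
      exact hσc
    rw [htop] at hstab
    intro τ
    have hmem : τ ∈ MulAction.stabilizer (K p (k + 1) ≃ₐ[K p k] K p (k + 1)) c :=
      hstab (Subgroup.mem_top τ)
    simpa [MulAction.mem_stabilizer_iff, AlgEquiv.smul_def] using hmem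
  have hcbot : c ∈ (⊥ : IntermediateField (K p k) (K p (k + 1))) := by
    have hff : IntermediateField.fixedField
        (⊤ : Subgroup (K p (k + 1) ≃ₐ[K p k] K p (k + 1))) = ⊥ :=
      (IsGalois.tfae.out 0 1).mp hgal
    rw [← hff]
    intro g
    exact hfix g.1
  obtain ⟨y, hy⟩ := IntermediateField.mem_bot.mp hcbot
  -- descend the equation to K p k
  have hyp : y ^ (p : ℕ) = εK * (zetaK p k) ^ t := by
    apply (algebraMap (K p k) (K p (k + 1))).injective
    rw [map_pow, hy, map_mul, map_pow, hcdef]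
    have hstep : (bL * ζL ^ t) ^ (p : ℕ) = bL ^ (p : ℕ) * (ζL ^ (p : ℕ)) ^ t := by
      rw [mul_pow, ← pow_mul, ← pow_mul, mul_comm t (p : ℕ)]
    rw [hstep, hbp, hζLp]
  -- the element y is integral
  have hyint : IsIntegral ℤ y := by
    refine IsIntegral.of_pow hp.pos ?_
    rw [hyp, hεKdef]
    have hzk : zetaK p k = algebraMap (R p k) (K p k) (zetaR p k) := rfl
    rw [hzk, ← map_pow, ← map_mul]
    exact NumberField.RingOfIntegers.isIntegral_coe _
  set Y : R p k := ⟨y, hyint⟩ with hYdef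
  have hYp : Y ^ (p : ℕ) = (ε : R p k) * (zetaR p k) ^ t := by
    apply NumberField.RingOfIntegers.coe_injective
    have hcoeY : algebraMap (R p k) (K p k) Y = y := rfl
    rw [map_pow, hcoeY, hyp, map_mul, map_pow]
    rfl
  -- the congruence condition forces p ∣ t
  have hp3 : 3 ≤ (p : ℕ) := by
    obtain ⟨j, hj⟩ := hodd
    have h2 := hp.two_le
    omega
  have hM : 2 ≤ (p : ℕ) ^ (k + 1) - 1 := by
    have hle : (p : ℕ) ≤ (p : ℕ) ^ (k + 1) := Nat.le_self_pow (Nat.succ_ne_zero k) _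
    omega
  have hε2 : (zetaR p k - 1) ^ 2 ∣ ((ε : R p k) - 1) := by
    have hmem : ((ε : R p k) - 1) ∈ (lam p k) ^ ((p : ℕ) ^ (k + 1) - 1) := hε.2
    rw [lam, Ideal.span_singleton_pow, Ideal.mem_span_singleton] at hmem
    exact dvd_trans (pow_dvd_pow _ hM) hmem
  have hdvdt : (p : ℕ) ∣ t := key_dvd p k hp hodd _ Y t hε2 hYp
  have ht0 : t = 0 := by
    rcases Nat.eq_zero_or_pos t with h0 | hpos
    · exact h0
    · exact absurd (Nat.le_of_dvd hpos hdvdt) (by omega)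
  exact h ⟨Y, by rw [hYp, ht0, pow_zero, mul_one]⟩

end KM
end
end

section
/- Let p be a prime, k ≥ 0 and l ≥ 1, and set f_{k,l}(X) = (X^{p^{k+l}} − 1)/(X^{p^k} − 1) ∈ ℤ[X] and A_{k,l} = ℤ[X]/(f_{k,l}). Since f_{k,l}(X^p) = f_{k+1,l}(X), there is a well-defined ring homomorphism A_{k,l} → A_{k+1,l} sending the class of X to the class of X^p. With respect to this algebra structure, A_{k+1,l} is a free A_{k,l}-module of rank p. -/
/-! Since `f_{k+1,l} = f_{k,l}(X^p)`, the ring `A_{k+1,l}` is obtained from `A_{k,l}` by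
adjoining a `p`-th root `Y` of the class `x` of `X`: it is `A_{k,l}[Y]/(Y^p - x)`, and since
`Y^p - x` is monic this quotient is free with basis `1, Y, …, Y^{p-1}`. -/

open Polynomial

noncomputable section

namespace Polynomial

variable {R : Type*} [CommRing R] {f g : R[X]} {a b n : ℕ}

theorem expand_eq_of_mul_X_pow_sub_one (hna : n * a ≠ 0)
    (hf : f * (X ^ a - 1) = X ^ b - 1) (hg : g * (X ^ (n * a) - 1) = X ^ (n * b) - 1) :
    g = expand R n f := by
  have hf' : expand R n f * (X ^ (n * a) - 1) = X ^ (n * b) - 1 := by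
    simpa [pow_mul] using congrArg (expand R n) hf
  simpa using (monic_X_pow_sub_C (1 : R) hna).isRegular.right (hg.trans hf'.symm)

theorem natDegree_pos_of_mul_X_pow_sub_one [Nontrivial R] (ha : a ≠ 0) (hab : a < b)
    (hf : f * (X ^ a - 1) = X ^ b - 1) : 0 < f.natDegree := by
  have hXa : ((X : R[X]) ^ a - 1).Monic := by simpa using monic_X_pow_sub_C (1 : R) ha
  have hXb : ((X : R[X]) ^ b - 1).Monic := by simpa using monic_X_pow_sub_C (1 : R) (by omega)
  have hdeg := congrArg natDegree hf
  rw [(hXa.of_mul_monic_right (hf ▸ hXb)).natDegree_mul hXa] at hdeg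
  simp only [← C_1, natDegree_X_pow_sub_C] at hdeg
  omega

end Polynomial

namespace AdjoinRoot

theorem root_X_pow_sub_C_pow {S : Type*} [CommRing S] (n : ℕ) (a : S) :
    root (X ^ n - C a) ^ n = of _ a := by
  have h := eval₂_root (X ^ n - C a)
  rwa [eval₂_sub, eval₂_X_pow, eval₂_C, sub_eq_zero] at h

variable {R : Type*} [CommRing R] (f : R[X]) (n : ℕ)

def expandAlgHom : AdjoinRoot f →ₐ[R] AdjoinRoot (expand R n f) :=
  liftAlgHom f (Algebra.ofId R _) (root _ ^ n) (by
    change aeval _ f = 0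
    rw [← expand_aeval, aeval_eq, mk_self])

theorem expandAlgHom_root : expandAlgHom f n (root f) = root (expand R n f) ^ n :=
  liftAlgHom_root ..

abbrev expandAlgebra : Algebra (AdjoinRoot f) (AdjoinRoot (expand R n f)) :=
  (expandAlgHom f n).toRingHom.toAlgebra

attribute [local instance] expandAlgebra

theorem algebraMap_eq_expandAlgHom_apply (x : AdjoinRoot f) :
    algebraMap (AdjoinRoot f) (AdjoinRoot (expand R n f)) x = expandAlgHom f n x :=
  rfl

def toExpand : AdjoinRoot (X ^ n - C (root f)) →ₐ[AdjoinRoot f] AdjoinRoot (expand R n f) :=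
  liftAlgHom _ (Algebra.ofId _ _) (root _) (by
    change aeval _ _ = 0
    simp [algebraMap_eq_expandAlgHom_apply, expandAlgHom_root])

theorem toExpand_root : toExpand f n (root _) = root (expand R n f) :=
  liftAlgHom_root ..

def ofExpandAux : AdjoinRoot (expand R n f) →ₐ[R] AdjoinRoot (X ^ n - C (root f)) :=
  liftAlgHom _ (Algebra.ofId _ _) (root _) (by
    change aeval _ _ = 0
    rw [expand_aeval, root_X_pow_sub_C_pow, ← algebraMap_eq, aeval_algebraMap_apply, aeval_eq,
      mk_self, map_zero])

def ofExpand : AdjoinRoot (expand R n f) →ₐ[AdjoinRoot f] AdjoinRoot (X ^ n - C (root f)) where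
  __ := ofExpandAux f n
  commutes' x := by
    suffices (ofExpandAux f n).comp (expandAlgHom f n) =
        IsScalarTower.toAlgHom R (AdjoinRoot f) (AdjoinRoot (X ^ n - C (root f))) from
      congr($this x)
    refine algHom_ext ?_
    simp [ofExpandAux, expandAlgHom_root, root_X_pow_sub_C_pow]

theorem ofExpand_apply (x : AdjoinRoot (expand R n f)) : ofExpand f n x = ofExpandAux f n x :=
  rfl

theorem ofExpand_root : ofExpand f n (root (expand R n f)) = root (X ^ n - C (root f)) := by
  rw [ofExpand_apply]
  exact liftAlgHom_root ..

def expandEquiv : AdjoinRoot (X ^ n - C (root f)) ≃ₐ[AdjoinRoot f] AdjoinRoot (expand R n f) :=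
  AlgEquiv.ofAlgHom (toExpand f n) (ofExpand f n)
    (AlgHom.coe_ringHom_injective (ringHom_ext (RingHom.ext fun r => by
      simp [ofExpand_apply, ofExpandAux, toExpand]) (by
      rw [RingHom.coe_coe, AlgHom.comp_apply, ofExpand_root, toExpand_root, RingHom.coe_coe,
        AlgHom.id_apply])))
    (algHom_ext (by rw [AlgHom.comp_apply, toExpand_root, ofExpand_root, AlgHom.id_apply]))

def expandPowerBasis (hn : n ≠ 0) : PowerBasis (AdjoinRoot f) (AdjoinRoot (expand R n f)) :=
  (powerBasis' (monic_X_pow_sub_C (root f) hn)).map (expandEquiv f n)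

theorem expandPowerBasis_dim [Nontrivial (AdjoinRoot f)] (hn : n ≠ 0) :
    (expandPowerBasis f n hn).dim = n :=
  natDegree_X_pow_sub_C

theorem free_expand (hn : n ≠ 0) : Module.Free (AdjoinRoot f) (AdjoinRoot (expand R n f)) :=
  .of_basis (expandPowerBasis f n hn).basis

theorem finrank_expand [Nontrivial (AdjoinRoot f)] (hn : n ≠ 0) :
    Module.finrank (AdjoinRoot f) (AdjoinRoot (expand R n f)) = n :=
  (expandPowerBasis f n hn).finrank.trans (expandPowerBasis_dim f n hn)

end AdjoinRoot

/-- Let `p` be a prime, `k ≥ 0`, `l ≥ 1`, and let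
`f = f_{k,l} = (X^{p^{k+l}} - 1)/(X^{p^k} - 1)` and `g = f_{k+1,l}` in `ℤ[X]`, and put
`A_{k,l} = ℤ[X]/(f)`, `A_{k+1,l} = ℤ[X]/(g)`. Since `f_{k,l}(X^p) = f_{k+1,l}(X)`, there
is a well-defined ring homomorphism `A_{k,l} → A_{k+1,l}` sending the class of `X` to the
class of `X^p`, and with respect to this algebra structure `A_{k+1,l}` is a free
`A_{k,l}`-module of rank `p`. -/
theorem statement13 (p : ℕ) (hp : p.Prime) (k l : ℕ) (hl : 1 ≤ l)
    (f g : Polynomial ℤ)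
    (hf : f * (Polynomial.X ^ (p ^ k) - 1) = Polynomial.X ^ (p ^ (k + l)) - 1)
    (hg : g * (Polynomial.X ^ (p ^ (k + 1)) - 1) = Polynomial.X ^ (p ^ (k + 1 + l)) - 1) :
    ∃ φ : (Polynomial ℤ ⧸ Ideal.span {f}) →+* (Polynomial ℤ ⧸ Ideal.span {g}),
      φ (Ideal.Quotient.mk (Ideal.span {f}) Polynomial.X) =
        Ideal.Quotient.mk (Ideal.span {g}) (Polynomial.X ^ p) ∧
      @Module.Free (Polynomial ℤ ⧸ Ideal.span {f}) (Polynomial ℤ ⧸ Ideal.span {g}) _ _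
        (Module.compHom (Polynomial ℤ ⧸ Ideal.span {g}) φ) ∧
      @Module.finrank (Polynomial ℤ ⧸ Ideal.span {f}) (Polynomial ℤ ⧸ Ideal.span {g}) _ _
        (Module.compHom (Polynomial ℤ ⧸ Ideal.span {g}) φ) = p := by
  have hp0 : p ≠ 0 := hp.ne_zero
  obtain rfl : g = expand ℤ p f := by
    refine expand_eq_of_mul_X_pow_sub_one (mul_ne_zero hp0 (pow_ne_zero k hp0)) hf ?_
    rwa [← pow_succ', ← pow_succ', Nat.add_right_comm]
  have : Nontrivial (AdjoinRoot f) := AdjoinRoot.nontrivial f <| by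
    refine (natDegree_pos_iff_degree_pos.mp ?_).ne'
    exact natDegree_pos_of_mul_X_pow_sub_one (pow_ne_zero k hp0)
      (Nat.pow_lt_pow_right hp.one_lt (by omega)) hf
  exact ⟨(AdjoinRoot.expandAlgHom f p).toRingHom, AdjoinRoot.expandAlgHom_root f p,
    AdjoinRoot.free_expand f p hp0, AdjoinRoot.finrank_expand f p hp0⟩
end
end
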